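/- arXiv:2604.12840 — 2 statements merged into one kernel-verified Lean document; each statement's English description precedes it below -/
import Mathlib

section
/- (Bounds on the unconditioned infinite-horizon value) Let Assumptions A1 (continuity and compactness), A2 (strict dissipativity), A3 (terminal conditions), A5 (bound on V_N) and A6 (minimality of Π*) hold, and let ℓ_{Π*} = 0. Then there exists D > 0 such that for all N ∈ N and all x ∈ X_N, −D ≤ V^uc_∞(x) ≤ γ_V(||x||_{Π*_X}) + V_N(Π*_X(i_x)) − V_{Π*}, where γ_V is the function from A5. -/
open Filter Topology

section EMPCDefs

variable {E F : Type*} [NormedAddCommGroup E] [NormedAddCommGroup F]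

/-- State trajectory `x_u(k, x₀)` of the system `x⁺ = f(x, u)` under input sequence `u`. -/
def traj (f : E × F → E) (x : E) (u : ℕ → F) : ℕ → E
  | 0 => x
  | k + 1 => f (traj f x u k, u k)

/-- `u ∈ U^N(x)`: input sequences of length `N` keeping the state in `X`. -/
def FeasN (f : E × F → E) (X : Set E) (U : Set F) (x : E) (N : ℕ) (u : ℕ → F) : Prop :=
  (∀ k < N, u k ∈ U) ∧ ∀ k ≤ N, traj f x u k ∈ X

/-- `u ∈ U^∞(x)`: infinite input sequences keeping the state in `X`. -/
def FeasInf (f : E × F → E) (X : Set E) (U : Set F) (x : E) (u : ℕ → F) : Prop :=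
  (∀ k, u k ∈ U) ∧ ∀ k, traj f x u k ∈ X

/-- The feasible set `X_N` of the terminal-constrained problem. -/
def XN (f : E × F → E) (X : Set E) (U : Set F) (Xf : Set E) (N : ℕ) : Set E :=
  {x | ∃ u : ℕ → F, FeasN f X U x N u ∧ traj f x u N ∈ Xf}

/-- The feasible set `X_∞`. -/
def XInf (f : E × F → E) (X : Set E) (U : Set F) : Set E :=
  {x | ∃ u : ℕ → F, FeasInf f X U x u}

/-- Distance `‖(x,u)‖_Π` of a state-input pair to a `p`-periodic orbit `Π = (i ↦ P i)`. -/
noncomputable def distOrbit (p : ℕ) (P : ℕ → E × F) (z : E × F) : ℝ :=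
  ⨅ i : Fin p, ‖z - P ↑i‖

/-- Distance `‖x‖_{Π_X}` of a state to the state part of a `p`-periodic orbit. -/
noncomputable def distOrbitX (p : ℕ) (PX : ℕ → E) (x : E) : ℝ :=
  ⨅ i : Fin p, ‖x - PX ↑i‖

/-- `Π = (Π_X, Π_U)` (given on `{0, …, p-1}`) is a feasible `p`-periodic orbit. -/
def FeasOrbit (f : E × F → E) (X : Set E) (U : Set F) (p : ℕ)
    (PX : ℕ → E) (PU : ℕ → F) : Prop :=
  (∀ i < p, PX i ∈ X) ∧ (∀ i < p, PU i ∈ U) ∧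
    ∀ i < p, PX ((i + 1) % p) = f (PX i, PU i)

/-- Average cost `ℓ_Π = (1/p) Σ_{i<p} ℓ(Π(i))` of a `p`-periodic orbit. -/
noncomputable def avgCost (ℓ : E × F → ℝ) (p : ℕ) (PX : ℕ → E) (PU : ℕ → F) : ℝ :=
  (1 / (p : ℝ)) * ∑ i ∈ Finset.range p, ℓ (PX i, PU i)

/-- Average `(1/p) Σ_{i<p} g(Π_X(i))` of a function over the state part of an orbit. -/
noncomputable def avgOrbit (g : E → ℝ) (p : ℕ) (PX : ℕ → E) : ℝ :=
  (1 / (p : ℝ)) * ∑ i ∈ Finset.range p, g (PX i)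

/-- `Π*` is an optimal periodic orbit: it is feasible and its average cost is the
infimum of the average costs over all feasible periodic orbits. -/
def IsOptimalOrbit (f : E × F → E) (X : Set E) (U : Set F) (ℓ : E × F → ℝ) (p : ℕ)
    (PX : ℕ → E) (PU : ℕ → F) : Prop :=
  FeasOrbit f X U p PX PU ∧
    ∀ q : ℕ, 0 < q → ∀ (QX : ℕ → E) (QU : ℕ → F),
      FeasOrbit f X U q QX QU → avgCost ℓ p PX PU ≤ avgCost ℓ q QX QU

/-- Accumulated stage cost `J^1_K(x, u)`. -/
noncomputable def J1 (f : E × F → E) (ℓ : E × F → ℝ) (x : E) (u : ℕ → F) (K : ℕ) : ℝ :=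
  ∑ k ∈ Finset.range K, ℓ (traj f x u k, u k)

/-- Finite-horizon cost functional `J_N(x, u)` with terminal cost `Vf`. -/
noncomputable def JN (f : E × F → E) (ℓ : E × F → ℝ) (Vf : E → ℝ) (x : E) (u : ℕ → F)
    (N : ℕ) : ℝ :=
  J1 f ℓ x u N + Vf (traj f x u N)

/-- Optimal value function `V_N(x)` of the terminal-constrained problem. -/
noncomputable def VN (f : E × F → E) (X : Set E) (U : Set F) (ℓ : E × F → ℝ) (Vf : E → ℝ)
    (Xf : Set E) (N : ℕ) (x : E) : ℝ :=
  sInf ((fun u => JN f ℓ Vf x u N) '' {u : ℕ → F | FeasN f X U x N u ∧ traj f x u N ∈ Xf})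

/-- Rotated stage cost `ℓ̃(x,u) = ℓ(x,u) - ℓ_{Π*} + λ(x) - λ(f(x,u))`. -/
def rotCost (f : E × F → E) (ℓ : E × F → ℝ) (lam : E → ℝ) (lp : ℝ) (z : E × F) : ℝ :=
  ℓ z - lp + lam z.1 - lam (f z)

/-- Finite-horizon Cesàro cost `J^ces_K(x,u) = Σ_{k<K} (1 - k/K) ℓ(x_u(k,x), u(k))`. -/
noncomputable def Jces (f : E × F → E) (ℓ : E × F → ℝ) (x : E) (u : ℕ → F) (K : ℕ) : ℝ :=
  ∑ k ∈ Finset.range K, (1 - (k : ℝ) / (K : ℝ)) * ℓ (traj f x u k, u k)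

/-- Infinite-horizon Cesàro cost `J^ces_∞(x,u) = limsup_K J^ces_K(x,u)`. -/
noncomputable def JcesInf (f : E × F → E) (ℓ : E × F → ℝ) (x : E) (u : ℕ → F) : ℝ :=
  limsup (fun K : ℕ => Jces f ℓ x u K) atTop

/-- Unconditioned infinite-horizon value `V^uc_∞(x)`. -/
noncomputable def VucInf (f : E × F → E) (X : Set E) (U : Set F) (ℓ : E × F → ℝ)
    (x : E) : ℝ :=
  sInf ((fun u => JcesInf f ℓ x u) '' {u : ℕ → F | FeasInf f X U x u})

/-- Closed-loop state trajectory `x_μ(k, x)` under a feedback law `μ`. -/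
def trajCl (f : E × F → E) (μ : E → F) (x : E) : ℕ → E
  | 0 => x
  | k + 1 => f (trajCl f μ x k, μ (trajCl f μ x k))

/-- Closed-loop finite-horizon Cesàro cost `J^cl_K(x, μ)`. -/
noncomputable def JclK (f : E × F → E) (ℓ : E × F → ℝ) (μ : E → F) (x : E) (K : ℕ) : ℝ :=
  ∑ k ∈ Finset.range K, (1 - (k : ℝ) / (K : ℝ)) * ℓ (trajCl f μ x k, μ (trajCl f μ x k))

/-- Closed-loop infinite-horizon Cesàro cost `J^cl_∞(x, μ)`. -/
noncomputable def JclInf (f : E × F → E) (ℓ : E × F → ℝ) (μ : E → F) (x : E) : ℝ :=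
  limsup (fun K : ℕ => JclK f ℓ μ x K) atTop

end EMPCDefs

/-- Class `K_∞` comparison functions `[0,∞) → [0,∞)`. -/
def IsKInf (α : ℝ → ℝ) : Prop :=
  ContinuousOn α (Set.Ici 0) ∧ StrictMonoOn α (Set.Ici 0) ∧ α 0 = 0 ∧
    Filter.Tendsto α Filter.atTop Filter.atTop

/-- Class `L` comparison functions `[0,∞) → [0,∞)`. -/
def IsClassL (σ : ℝ → ℝ) : Prop :=
  ContinuousOn σ (Set.Ici 0) ∧ AntitoneOn σ (Set.Ici 0) ∧ (∀ t, 0 ≤ t → 0 ≤ σ t) ∧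
    Filter.Tendsto σ Filter.atTop (nhds 0)

/-!
With `ℓ_{Π*} = 0` and `α ≥ 0`, dissipativity gives `ℓ(x, u) ≥ λ(f(x, u)) - λ(x)`, so every partial
sum `J¹_K` along a feasible trajectory is at least `λ(x(K)) - λ(x) ≥ -2 max |λ|`; this bounds all
Cesàro costs, hence `V^uc_∞`, from below.

For the upper bound, continue an admissible `N`-step input `u` by the terminal law `u_f`. Along the
tail, `V_f + λ` decreases by at least `α(‖·‖_{Π*})`, so the closed loop converges to `Π*`; by
uniform continuity of `f` and minimality of `Π*` it eventually follows `Π*` with a fixed phase,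
so the Cesàro means of `V_f` along it tend to `V_{Π*}`. Since `J¹_k + V_f(x(k)) ≤ J_N(x, u)` for
`k ≥ N`, the extension has Cesàro cost at most `J_N(x, u) - V_{Π*}`. Taking the infimum over `u`
gives `V^uc_∞(x) ≤ V_N(x) - V_{Π*}`, and A5 compares `V_N(x)` with `V_N(Π*_X(i_x))`.
-/

open Finset

noncomputable def cesaroMean (a : ℕ → ℝ) (K : ℕ) : ℝ :=
  (K : ℝ)⁻¹ * ∑ k ∈ range K, a k

theorem Function.Periodic.sum_range_add {g : ℕ → ℝ} {p : ℕ} (hg : Function.Periodic g p)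
    (a : ℕ) : ∑ i ∈ range p, g (a + i) = ∑ i ∈ range p, g i := by
  induction a with
  | zero => simp
  | succ a ih =>
    have h := (sum_range_succ' (fun i => g (a + i)) p).symm.trans
      (sum_range_succ (fun i => g (a + i)) p)
    rw [add_zero, hg a, ih, add_left_inj] at h
    rw [← h]
    exact sum_congr rfl fun i _ => by rw [add_assoc, add_comm 1 i]

theorem Function.Periodic.tendsto_cesaroMean {g : ℕ → ℝ} {p : ℕ}
    (hg : Function.Periodic g p) (hp : 0 < p) :
    Tendsto (cesaroMean g) atTop (𝓝 (cesaroMean g p)) := by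
  set L := cesaroMean g p
  set T : ℕ → ℝ := fun K => ∑ k ∈ range K, g k - K * L
  have hT : Function.Periodic T p := by
    intro K
    have hpL : (p : ℝ) * L = ∑ k ∈ range p, g k := by
      simp only [L, cesaroMean]; field_simp
    simp only [T]
    rw [Finset.sum_range_add, hg.sum_range_add, Nat.cast_add, add_mul, hpL]
    ring
  have hbdd : IsBoundedUnder (· ≤ ·) atTop fun K => ‖T K‖ :=
    isBoundedUnder_of ⟨∑ r ∈ range p, ‖T r‖, fun K => by
      rw [← hT.map_mod_nat K]
      exact single_le_sum (fun r _ => norm_nonneg (T r)) (mem_range.2 (Nat.mod_lt K hp))⟩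
  have h0 : Tendsto (fun K : ℕ => (K : ℝ)⁻¹ * T K) atTop (𝓝 0) :=
    tendsto_inv_atTop_nhds_zero_nat.zero_mul_isBoundedUnder_le hbdd
  have h1 := h0.add_const L
  rw [zero_add] at h1
  refine h1.congr' ?_
  filter_upwards [eventually_ne_atTop 0] with K hK
  simp only [T, cesaroMean]
  field_simp
  ring

theorem tendsto_cesaroMean_of_tendsto_sub {a c : ℕ → ℝ} {L : ℝ}
    (hc : Tendsto (cesaroMean c) atTop (𝓝 L)) (hac : Tendsto (a - c) atTop (𝓝 0)) :
    Tendsto (cesaroMean a) atTop (𝓝 L) := by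
  have h := hac.cesaro.add hc
  rw [zero_add] at h
  refine h.congr fun K => ?_
  simp only [cesaroMean, Pi.sub_apply, sum_sub_distrib]
  ring

theorem limsup_cesaroMean_le {a b : ℕ → ℝ} {L : ℝ} (hab : ∀ᶠ k in atTop, a k ≤ b k)
    (hb : Tendsto (cesaroMean b) atTop (𝓝 L))
    (ha : IsCoboundedUnder (· ≤ ·) atTop (cesaroMean a)) :
    limsup (cesaroMean a) atTop ≤ L := by
  set e : ℕ → ℝ := fun k => max (a k - b k) 0
  have he : Tendsto (cesaroMean e) atTop (𝓝 0) := by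
    refine (tendsto_const_nhds.congr' ?_).cesaro
    filter_upwards [hab] with k hk
    simp [e, hk]
  have hle : cesaroMean a ≤ cesaroMean b + cesaroMean e := fun K => by
    simp only [Pi.add_apply, cesaroMean, ← mul_add, ← sum_add_distrib]
    gcongr with k
    simp only [e]
    linarith [le_max_left (a k - b k) 0]
  have hlim := hb.add he
  rw [add_zero] at hlim
  exact (limsup_le_limsup (Eventually.of_forall hle) ha hlim.isBoundedUnder_le).trans
    hlim.limsup_eq.le

-- `c ≤ 0` is needed because `limsup` of a real sequence that is unbounded above is `0`.
theorem le_limsup_of_forall_le_of_nonpos {u : ℕ → ℝ} {c : ℝ} (h : ∀ n, c ≤ u n) (hc : c ≤ 0) :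
    c ≤ limsup u atTop := by
  rw [limsup_eq]
  exact Real.le_sInf (fun a ha => ha.exists.elim fun n hn => (h n).trans hn) hc

namespace IsKInf

variable {α : ℝ → ℝ}

theorem nonneg (hα : IsKInf α) {t : ℝ} (ht : 0 ≤ t) : 0 ≤ α t := by
  rw [← hα.2.2.1]
  exact hα.2.1.monotoneOn Set.self_mem_Ici ht ht

theorem tendsto_zero_of_tendsto_comp (hα : IsKInf α) {d : ℕ → ℝ} (hd : ∀ n, 0 ≤ d n)
    (h : Tendsto (fun n => α (d n)) atTop (𝓝 0)) : Tendsto d atTop (𝓝 0) := by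
  refine Metric.tendsto_atTop.2 fun ε hε => ?_
  have hαε : 0 < α ε := hα.2.2.1 ▸ hα.2.1 Set.self_mem_Ici hε.le hε
  obtain ⟨M, hM⟩ := eventually_atTop.1 (h.eventually_lt_const hαε)
  refine ⟨M, fun n hn => ?_⟩
  rw [Real.dist_0_eq_abs, abs_of_nonneg (hd n)]
  exact (hα.2.1.lt_iff_lt (hd n) hε.le).1 (hM n hn)

theorem tendsto_zero_of_le_sub_succ (hα : IsKInf α) {d W : ℕ → ℝ} (hd : ∀ n, 0 ≤ d n)
    (hW : BddBelow (Set.range W)) (h : ∀ n, α (d n) ≤ W n - W (n + 1)) :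
    Tendsto d atTop (𝓝 0) := by
  obtain ⟨m, hm⟩ := hW
  have hsum : Summable fun n => α (d n) := by
    refine summable_of_sum_range_le (c := W 0 - m) (fun n => hα.nonneg (hd n)) fun n => ?_
    calc ∑ k ∈ range n, α (d k) ≤ ∑ k ∈ range n, (W k - W (k + 1)) := sum_le_sum fun k _ => h k
      _ = W 0 - W n := sum_range_sub' W n
      _ ≤ W 0 - m := by linarith [hm ⟨n, rfl⟩]
  exact hα.tendsto_zero_of_tendsto_comp hd hsum.tendsto_atTop_zero

end IsKInf

theorem Set.InjOn.exists_pos_le_dist {ι E : Type*} [MetricSpace E] {P : ι → E} {s : Set ι}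
    (hP : Set.InjOn P s) (hs : s.Finite) :
    ∃ δ > 0, ∀ i ∈ s, ∀ j ∈ s, i ≠ j → δ ≤ dist (P i) (P j) := by
  have h : ∀ᶠ δ in 𝓝[>] (0 : ℝ), ∀ i ∈ s, ∀ j ∈ s, i ≠ j → δ ≤ dist (P i) (P j) := by
    refine (eventually_all_finite hs).2 fun i hi => (eventually_all_finite hs).2 fun j hj => ?_
    by_cases hij : i = j
    · exact Eventually.of_forall fun _ h => absurd hij h
    · have hpos : 0 < dist (P i) (P j) := dist_pos.2 fun e => hij (hP hi hj e)
      filter_upwards [nhdsWithin_le_nhds (eventually_le_nhds hpos)] with δ hδ _ using hδ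
  obtain ⟨δ, hδ, hpos⟩ := (h.and self_mem_nhdsWithin).exists
  exact ⟨δ, hpos, hδ⟩

theorem exists_eventually_eq_add_mod {φ : ℕ → ℕ} {p : ℕ} (hφ : ∀ k, φ k < p)
    (h : ∀ᶠ k in atTop, φ (k + 1) = (φ k + 1) % p) :
    ∃ a, ∀ᶠ k in atTop, φ k = (k + a) % p := by
  obtain ⟨J, hJ⟩ := eventually_atTop.1 h
  -- `p * J` is added before subtracting `J` so that the natural subtraction does not truncate.
  have hJp : J ≤ p * J := Nat.le_mul_of_pos_left J (Nat.zero_lt_of_lt (hφ 0))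
  refine ⟨φ J + p * J - J, eventually_atTop.2 ⟨J, fun k hk => ?_⟩⟩
  induction k, hk using Nat.le_induction with
  | base =>
    rw [show J + (φ J + p * J - J) = φ J + p * J by omega, Nat.add_mul_mod_self_left,
      Nat.mod_eq_of_lt (hφ J)]
  | succ k hk ih =>
    rw [hJ k hk, ih, Nat.mod_add_mod, add_right_comm]

section Orbits

variable {E F : Type*} [NormedAddCommGroup E] [NormedAddCommGroup F]

theorem distOrbit_nonneg (p : ℕ) (P : ℕ → E × F) (z : E × F) : 0 ≤ distOrbit p P z :=
  Real.iInf_nonneg fun _ => norm_nonneg _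

theorem exists_norm_eq_distOrbit {p : ℕ} (hp : 0 < p) (P : ℕ → E × F) (z : E × F) :
    ∃ i < p, ‖z - P i‖ = distOrbit p P z := by
  have : Nonempty (Fin p) := ⟨⟨0, hp⟩⟩
  obtain ⟨i, hi⟩ := Finite.exists_min fun i : Fin p => ‖z - P i‖
  exact ⟨i, i.2, le_antisymm (le_ciInf hi) (ciInf_le (Finite.bddBelow_range _) i)⟩

theorem exists_phase_of_tendsto_distOrbit {f : E × F → E} {s : Set (E × F)}
    (hf : UniformContinuousOn f s) {p : ℕ} (hp : 0 < p) {PX : ℕ → E} {PU : ℕ → F}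
    (hinj : Set.InjOn PX (Set.Iio p)) (hPs : ∀ i < p, (PX i, PU i) ∈ s)
    (hPf : ∀ i < p, PX ((i + 1) % p) = f (PX i, PU i)) {x : E} {u : ℕ → F}
    (hs : ∀ k, (traj f x u k, u k) ∈ s)
    (hd : Tendsto (fun k => distOrbit p (fun i => (PX i, PU i)) (traj f x u k, u k))
      atTop (𝓝 0)) :
    ∃ a, Tendsto (fun k => ‖traj f x u k - PX ((k + a) % p)‖) atTop (𝓝 0) := by
  choose φ hφp hφd using fun k =>
    exists_norm_eq_distOrbit hp (fun i => (PX i, PU i)) (traj f x u k, u k)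
  have hclose : ∀ k, ‖traj f x u k - PX (φ k)‖ ≤ ‖(traj f x u k, u k) - (PX (φ k), PU (φ k))‖ :=
    fun k => norm_fst_le ((traj f x u k, u k) - (PX (φ k), PU (φ k)))
  obtain ⟨δ, hδ, hsep⟩ := hinj.exists_pos_le_dist (Set.finite_Iio p)
  obtain ⟨η, hη, hfη⟩ := Metric.uniformContinuousOn_iff.1 hf (δ / 2) (half_pos hδ)
  -- `f` maps pairs near `Π(i)` near `Π_X(i + 1)`, and distinct orbit states are `δ` apart.
  have hstep : ∀ᶠ k in atTop, φ (k + 1) = (φ k + 1) % p := by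
    have hsmall := hd.eventually_lt_const (lt_min hη (by positivity : 0 < δ / 4))
    filter_upwards [hsmall, (tendsto_add_atTop_nat 1).eventually hsmall] with k hk hk1
    by_contra hne
    have hnext : dist (traj f x u (k + 1)) (PX ((φ k + 1) % p)) < δ / 2 := by
      rw [hPf _ (hφp k)]
      refine hfη _ (hs k) _ (hPs _ (hφp k)) ?_
      rw [dist_eq_norm, hφd k]
      exact hk.trans_le (min_le_left _ _)
    have hnear : dist (traj f x u (k + 1)) (PX (φ (k + 1))) < δ / 4 := by
      rw [dist_eq_norm]
      exact (hclose _).trans_lt (hφd (k + 1) ▸ hk1.trans_le (min_le_right _ _))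
    have hfar := hsep _ (hφp (k + 1)) _ (Nat.mod_lt _ hp) hne
    linarith [dist_triangle_left (PX (φ (k + 1))) (PX ((φ k + 1) % p)) (traj f x u (k + 1))]
  obtain ⟨a, ha⟩ := exists_eventually_eq_add_mod hφp hstep
  refine ⟨a, squeeze_zero' (Eventually.of_forall fun k => norm_nonneg _) ?_ hd⟩
  filter_upwards [ha] with k hk
  rw [← hk, ← hφd k]
  exact hclose k

end Orbits

theorem tendsto_cesaroMean_avgOrbit {E : Type*} [NormedAddCommGroup E] {g : E → ℝ}
    {s : Set E} (hg : UniformContinuousOn g s) {p : ℕ} (hp : 0 < p) {PX : ℕ → E}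
    (hPs : ∀ i < p, PX i ∈ s) {z : ℕ → E} (hz : ∀ᶠ k in atTop, z k ∈ s) (a : ℕ)
    (h : Tendsto (fun k => ‖z k - PX ((k + a) % p)‖) atTop (𝓝 0)) :
    Tendsto (cesaroMean fun k => g (z k)) atTop (𝓝 (avgOrbit g p PX)) := by
  set c : ℕ → ℝ := fun k => g (PX ((k + a) % p))
  have hc : Function.Periodic c p := fun k => by
    simp only [c, add_right_comm k p a, Nat.add_mod_right]
  have hcp : cesaroMean c p = avgOrbit g p PX := by
    have hG : Function.Periodic (fun i => g (PX (i % p))) p := fun i => by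
      simp only [Nat.add_mod_right]
    simp only [cesaroMean, avgOrbit, one_div, c, add_comm _ a, hG.sum_range_add]
    congr 1
    exact sum_congr rfl fun i hi => by rw [Nat.mod_eq_of_lt (mem_range.1 hi)]
  refine tendsto_cesaroMean_of_tendsto_sub (hcp ▸ hc.tendsto_cesaroMean hp) ?_
  refine Metric.tendsto_nhds.2 fun ε hε => ?_
  obtain ⟨η, hη, hgη⟩ := Metric.uniformContinuousOn_iff.1 hg ε hε
  filter_upwards [hz, h.eventually (gt_mem_nhds hη)] with k hzk hk
  rw [← dist_eq_norm] at hk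
  rw [Pi.sub_apply, Real.dist_0_eq_abs, ← Real.dist_eq]
  exact hgη _ hzk _ (hPs _ (Nat.mod_lt _ hp)) hk

theorem sum_range_sum_range_succ (c : ℕ → ℝ) (K : ℕ) :
    ∑ n ∈ range K, ∑ k ∈ range (n + 1), c k = ∑ k ∈ range K, ((K : ℝ) - k) * c k := by
  induction K with
  | zero => simp
  | succ K ih =>
    rw [sum_range_succ, ih, sum_range_succ _ K, sum_range_succ _ K]
    have h : ∑ k ∈ range K, ((K + 1 : ℕ) - (k : ℝ)) * c k
        = ∑ k ∈ range K, ((K : ℝ) - k) * c k + ∑ k ∈ range K, c k := by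
      rw [← sum_add_distrib]
      exact sum_congr rfl fun k _ => by push_cast; ring
    rw [h]
    push_cast
    ring

-- `c ≤ 0` covers `K = 0`, where the mean is the empty sum.
theorem le_cesaroMean {a : ℕ → ℝ} {c : ℝ} (h : ∀ k, c ≤ a k) (hc : c ≤ 0) (K : ℕ) :
    c ≤ cesaroMean a K := by
  rcases Nat.eq_zero_or_pos K with rfl | hK
  · simpa [cesaroMean] using hc
  have hK' : (0 : ℝ) < K := Nat.cast_pos.2 hK
  calc c = (K : ℝ)⁻¹ * ∑ _k ∈ range K, c := by
        rw [sum_const, card_range, nsmul_eq_mul]; field_simp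
    _ ≤ cesaroMean a K := by unfold cesaroMean; gcongr with k; exact h k

section Costs

variable {E F : Type*} {f : E × F → E} {ℓ : E × F → ℝ} {x : E}

theorem traj_congr {u w : ℕ → F} {n : ℕ} (h : ∀ k < n, w k = u k) :
    traj f x w n = traj f x u n := by
  induction n with
  | zero => rfl
  | succ n ih =>
    simp only [traj, ih fun k hk => h k (hk.trans n.lt_succ_self), h n n.lt_succ_self]

theorem JN_congr {Vf : E → ℝ} {u w : ℕ → F} {N : ℕ} (h : ∀ k < N, w k = u k) :
    JN f ℓ Vf x w N = JN f ℓ Vf x u N := by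
  simp only [JN, J1, traj_congr h]
  congr 1
  exact sum_congr rfl fun k hk =>
    have hk : k < N := mem_range.1 hk
    by rw [traj_congr fun j hj => h j (hj.trans hk), h k hk]

theorem J1_succ (u : ℕ → F) (n : ℕ) :
    J1 f ℓ x u (n + 1) = J1 f ℓ x u n + ℓ (traj f x u n, u n) :=
  sum_range_succ _ _

theorem Jces_eq_cesaroMean (u : ℕ → F) (K : ℕ) :
    Jces f ℓ x u K = cesaroMean (fun n => J1 f ℓ x u (n + 1)) K := by
  rcases Nat.eq_zero_or_pos K with rfl | hK
  · simp [Jces, cesaroMean]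
  have hK' : (K : ℝ) ≠ 0 := Nat.cast_ne_zero.2 hK.ne'
  simp only [Jces, cesaroMean, J1, sum_range_sum_range_succ, mul_sum]
  exact sum_congr rfl fun k _ => by field_simp

variable {X : Set E} {U : Set F} {lam : E → ℝ}

theorem sub_le_J1 (hℓ : ∀ z ∈ X, ∀ v ∈ U, f (z, v) ∈ X → lam (f (z, v)) - lam z ≤ ℓ (z, v))
    {u : ℕ → F} (hu : FeasInf f X U x u) (n : ℕ) :
    lam (traj f x u n) - lam x ≤ J1 f ℓ x u n := by
  induction n with
  | zero => simp [J1, traj]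
  | succ n ih =>
    have hstep : lam (traj f x u (n + 1)) - lam (traj f x u n) ≤ ℓ (traj f x u n, u n) :=
      hℓ _ (hu.2 n) _ (hu.1 n) (hu.2 (n + 1))
    rw [J1_succ]
    linarith

theorem neg_two_mul_le_Jces
    (hℓ : ∀ z ∈ X, ∀ v ∈ U, f (z, v) ∈ X → lam (f (z, v)) - lam z ≤ ℓ (z, v))
    {u : ℕ → F} (hu : FeasInf f X U x u) {Λ : ℝ} (hΛ : ∀ k, |lam (traj f x u k)| ≤ Λ)
    (K : ℕ) : -(2 * Λ) ≤ Jces f ℓ x u K := by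
  rw [Jces_eq_cesaroMean]
  refine le_cesaroMean (fun n => ?_) (by linarith [(abs_nonneg _).trans (hΛ 0)]) K
  have h0 : lam x ≤ Λ := (abs_le.1 (hΛ 0)).2
  linarith [(abs_le.1 (hΛ (n + 1))).1, sub_le_J1 (ℓ := ℓ) hℓ hu (n + 1)]

theorem neg_two_mul_le_JcesInf
    (hℓ : ∀ z ∈ X, ∀ v ∈ U, f (z, v) ∈ X → lam (f (z, v)) - lam z ≤ ℓ (z, v))
    {u : ℕ → F} (hu : FeasInf f X U x u) {Λ : ℝ} (hΛ : ∀ k, |lam (traj f x u k)| ≤ Λ) :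
    -(2 * Λ) ≤ JcesInf f ℓ x u :=
  le_limsup_of_forall_le_of_nonpos (neg_two_mul_le_Jces hℓ hu hΛ)
    (by linarith [(abs_nonneg _).trans (hΛ 0)])

theorem sub_le_of_dissipative [NormedAddCommGroup E] [NormedAddCommGroup F] {α : ℝ → ℝ}
    (hα : IsKInf α) {p : ℕ} {P : ℕ → E × F}
    (hdiss : ∀ z ∈ X, ∀ v ∈ U, f (z, v) ∈ X →
      α (distOrbit p P (z, v)) ≤ rotCost f ℓ lam 0 (z, v)) :
    ∀ z ∈ X, ∀ v ∈ U, f (z, v) ∈ X → lam (f (z, v)) - lam z ≤ ℓ (z, v) := fun z hz v hv hfz => by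
  have h := hdiss z hz v hv hfz
  rw [rotCost] at h
  linarith [hα.nonneg (distOrbit_nonneg p P (z, v))]

theorem exists_abs_le_along_feasInf [TopologicalSpace E] [TopologicalSpace F]
    (hXU : IsCompact (X ×ˢ U)) (hlam : ContinuousOn lam X) :
    ∃ Λ, ∀ x u, FeasInf f X U x u → ∀ k, |lam (traj f x u k)| ≤ Λ := by
  obtain ⟨Λ, hΛ⟩ := (hXU.image continuous_fst).exists_bound_of_continuousOn
    (hlam.mono fun _ ⟨q, hq, e⟩ => e ▸ hq.1)
  exact ⟨Λ, fun x u hu k => hΛ _ ⟨(traj f x u k, u k), ⟨hu.2 k, hu.1 k⟩, rfl⟩⟩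

end Costs

section TerminalExtension

variable {E F : Type*} {f : E × F → E} {ℓ : E × F → ℝ} {X : Set E} {U : Set F} {Xf : Set E}
  {uf : E → F} {Vf : E → ℝ} {x : E} {N : ℕ}

theorem exists_feasInf_extension (hXfX : Xf ⊆ X) (hufU : ∀ z ∈ Xf, uf z ∈ U)
    (hufXf : ∀ z ∈ Xf, f (z, uf z) ∈ Xf) {u : ℕ → F} (hu : FeasN f X U x N u)
    (hT : traj f x u N ∈ Xf) :
    ∃ w, FeasInf f X U x w ∧ (∀ k < N, w k = u k) ∧
      ∀ k, N ≤ k → traj f x w k ∈ Xf ∧ w k = uf (traj f x w k) := by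
  set z := trajCl f uf (traj f x u N)
  have hz : ∀ j, z j ∈ Xf := fun j => by
    induction j with
    | zero => exact hT
    | succ j ih => exact hufXf _ ih
  set w : ℕ → F := fun k => if k < N then u k else uf (z (k - N))
  have hwu : ∀ k < N, w k = u k := fun k hk => if_pos hk
  have hw : ∀ j, w (N + j) = uf (z j) := fun j => by
    simp only [w, if_neg (Nat.not_lt.2 (Nat.le_add_right N j)), Nat.add_sub_cancel_left]
  have htraj : ∀ j, traj f x w (N + j) = z j := fun j => by
    induction j with
    | zero => exact traj_congr hwu
    | succ j ih =>
      change f (traj f x w (N + j), w (N + j)) = f (z j, uf (z j))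
      rw [ih, hw]
  have htail : ∀ k, N ≤ k → traj f x w k ∈ Xf ∧ w k = uf (traj f x w k) := fun k hk => by
    obtain ⟨j, rfl⟩ := Nat.exists_eq_add_of_le hk
    rw [htraj, hw]
    exact ⟨hz j, rfl⟩
  refine ⟨w, ⟨fun k => ?_, fun k => ?_⟩, hwu, htail⟩
  · rcases lt_or_ge k N with hk | hk
    · rw [hwu k hk]
      exact hu.1 k hk
    · rw [(htail k hk).2]
      exact hufU _ (htail k hk).1
  · rcases le_or_gt k N with hk | hk
    · rw [traj_congr fun j hj => hwu j (hj.trans_le hk)]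
      exact hu.2 k hk
    · exact hXfX (htail k hk.le).1

variable {w : ℕ → F}

theorem JN_le_of_tail (hdec : ∀ z ∈ Xf, Vf (f (z, uf z)) + ℓ (z, uf z) ≤ Vf z)
    (htail : ∀ k, N ≤ k → traj f x w k ∈ Xf ∧ w k = uf (traj f x w k)) {k : ℕ} (hk : N ≤ k) :
    JN f ℓ Vf x w k ≤ JN f ℓ Vf x w N := by
  induction k, hk using Nat.le_induction with
  | base => exact le_rfl
  | succ k hk ih =>
    obtain ⟨hmem, hwk⟩ := htail k hk
    have hstep : traj f x w (k + 1) = f (traj f x w k, uf (traj f x w k)) := by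
      rw [← hwk]
      rfl
    have := hdec _ hmem
    simp only [JN] at ih ⊢
    rw [J1_succ, hstep, hwk]
    linarith

variable [NormedAddCommGroup E]

theorem JcesInf_le_of_tendsto_orbit (hVf : UniformContinuousOn Vf Xf) {p : ℕ} (hp : 0 < p)
    {PX : ℕ → E} (hPXf : ∀ i < p, PX i ∈ Xf)
    (hdec : ∀ z ∈ Xf, Vf (f (z, uf z)) + ℓ (z, uf z) ≤ Vf z)
    (htail : ∀ k, N ≤ k → traj f x w k ∈ Xf ∧ w k = uf (traj f x w k))
    (hcob : IsCoboundedUnder (· ≤ ·) atTop (Jces f ℓ x w)) {a : ℕ}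
    (ha : Tendsto (fun k => ‖traj f x w k - PX ((k + a) % p)‖) atTop (𝓝 0)) :
    JcesInf f ℓ x w ≤ JN f ℓ Vf x w N - avgOrbit Vf p PX := by
  set C := JN f ℓ Vf x w N
  have hV : Tendsto (cesaroMean fun n => Vf (traj f x w (n + 1))) atTop
      (𝓝 (avgOrbit Vf p PX)) := by
    refine tendsto_cesaroMean_avgOrbit hVf hp hPXf ?_ (a + 1) ?_
    · filter_upwards [eventually_ge_atTop N] with n hn using (htail _ (hn.trans n.le_succ)).1
    · simpa only [add_right_comm _ 1 a, add_assoc] using (tendsto_add_atTop_iff_nat 1).2 ha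
  have hb : Tendsto (cesaroMean fun n => C - Vf (traj f x w (n + 1))) atTop
      (𝓝 (C - avgOrbit Vf p PX)) := by
    refine (tendsto_const_nhds.sub hV).congr' ?_
    filter_upwards [eventually_ne_atTop 0] with K hK
    simp only [cesaroMean, sum_sub_distrib, sum_const, card_range, nsmul_eq_mul]
    field_simp
  have hJces : Jces f ℓ x w = cesaroMean fun n => J1 f ℓ x w (n + 1) :=
    funext (Jces_eq_cesaroMean w)
  rw [hJces] at hcob
  change limsup (Jces f ℓ x w) atTop ≤ _
  rw [hJces]
  refine limsup_cesaroMean_le ?_ hb hcob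
  filter_upwards [eventually_ge_atTop N] with n hn
  have := JN_le_of_tail hdec htail (hn.trans n.le_succ)
  rw [JN] at this
  linarith

variable [NormedAddCommGroup F]

theorem tendsto_distOrbit_of_tail {α : ℝ → ℝ} (hα : IsKInf α) {p : ℕ} {P : ℕ → E × F}
    {lam : E → ℝ} (hdiss : ∀ z ∈ X, ∀ v ∈ U, f (z, v) ∈ X →
      α (distOrbit p P (z, v)) ≤ rotCost f ℓ lam 0 (z, v))
    (hdec : ∀ z ∈ Xf, Vf (f (z, uf z)) + ℓ (z, uf z) ≤ Vf z)
    (hbdd : BddBelow ((fun z => Vf z + lam z) '' Xf)) (hw : FeasInf f X U x w)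
    (htail : ∀ k, N ≤ k → traj f x w k ∈ Xf ∧ w k = uf (traj f x w k)) :
    Tendsto (fun k => distOrbit p P (traj f x w k, w k)) atTop (𝓝 0) := by
  rw [← tendsto_add_atTop_iff_nat N]
  refine hα.tendsto_zero_of_le_sub_succ (W := fun j => Vf (traj f x w (j + N)) +
    lam (traj f x w (j + N))) (fun _ => distOrbit_nonneg _ _ _) ?_ fun j => ?_
  · obtain ⟨m, hm⟩ := hbdd
    exact ⟨m, by rintro _ ⟨j, rfl⟩; exact hm ⟨_, (htail _ (Nat.le_add_left N j)).1, rfl⟩⟩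
  · obtain ⟨hmem, hwj⟩ := htail (j + N) (Nat.le_add_left N j)
    have hstep : traj f x w (j + 1 + N) = f (traj f x w (j + N), uf (traj f x w (j + N))) := by
      rw [add_right_comm, ← hwj]
      rfl
    have hdissj := hdiss _ (hw.2 _) _ (hw.1 _) (hw.2 (j + N + 1))
    have hdecj := hdec _ hmem
    simp only [rotCost, hwj, sub_zero] at hdissj
    simp only [hstep, hwj]
    linarith

end TerminalExtension

theorem exists_feasInf_JcesInf_le {E F : Type*} [NormedAddCommGroup E] [NormedAddCommGroup F]
    {f : E × F → E} {ℓ : E × F → ℝ} {X : Set E} {U : Set F}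
    (hf : UniformContinuousOn f (X ×ˢ U)) {p : ℕ} (hp : 0 < p) {PX : ℕ → E} {PU : ℕ → F}
    (horb : FeasOrbit f X U p PX PU) (hinj : Set.InjOn PX (Set.Iio p))
    {lam : E → ℝ} {α : ℝ → ℝ} (hα : IsKInf α)
    (hdiss : ∀ z ∈ X, ∀ v ∈ U, f (z, v) ∈ X →
      α (distOrbit p (fun i => (PX i, PU i)) (z, v)) ≤ rotCost f ℓ lam 0 (z, v))
    {Xf : Set E} (hXfX : Xf ⊆ X) (hPXf : ∀ i < p, PX i ∈ Xf) {Vf : E → ℝ}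
    (hVf : UniformContinuousOn Vf Xf) (hbdd : BddBelow ((fun z => Vf z + lam z) '' Xf))
    {uf : E → F} (hufU : ∀ z ∈ Xf, uf z ∈ U) (hufXf : ∀ z ∈ Xf, f (z, uf z) ∈ Xf)
    (hdec : ∀ z ∈ Xf, Vf (f (z, uf z)) + ℓ (z, uf z) ≤ Vf z) {x : E} {N : ℕ} {u : ℕ → F}
    (hu : FeasN f X U x N u) (hT : traj f x u N ∈ Xf)
    (hcob : ∀ w, FeasInf f X U x w → IsCoboundedUnder (· ≤ ·) atTop (Jces f ℓ x w)) :
    ∃ w, FeasInf f X U x w ∧ JcesInf f ℓ x w ≤ JN f ℓ Vf x u N - avgOrbit Vf p PX := by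
  obtain ⟨w, hw, hwu, htail⟩ := exists_feasInf_extension hXfX hufU hufXf hu hT
  have hd := tendsto_distOrbit_of_tail hα hdiss hdec hbdd hw htail
  obtain ⟨a, ha⟩ := exists_phase_of_tendsto_distOrbit hf hp hinj
    (fun i hi => ⟨horb.1 i hi, horb.2.1 i hi⟩) horb.2.2 (fun k => ⟨hw.2 k, hw.1 k⟩) hd
  refine ⟨w, hw, ?_⟩
  rw [← JN_congr hwu]
  exact JcesInf_le_of_tendsto_orbit hVf hp hPXf hdec htail (hcob w hw) ha

theorem stmt8_general
    (dn dm : ℕ)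
    (X : Set (EuclideanSpace ℝ (Fin dn))) (U : Set (EuclideanSpace ℝ (Fin dm)))
    (f : EuclideanSpace ℝ (Fin dn) × EuclideanSpace ℝ (Fin dm) → EuclideanSpace ℝ (Fin dn))
    (ℓ : EuclideanSpace ℝ (Fin dn) × EuclideanSpace ℝ (Fin dm) → ℝ)
    (p : ℕ) (hp : 0 < p)
    (PX : ℕ → EuclideanSpace ℝ (Fin dn)) (PU : ℕ → EuclideanSpace ℝ (Fin dm))
    (hopt : IsOptimalOrbit f X U ℓ p PX PU)
    -- A1 (continuity and compactness)
    (hcomp : IsCompact (X ×ˢ U))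
    (hfc : ContinuousOn f (X ×ˢ U))
    -- A2 (strict dissipativity)
    (lam : EuclideanSpace ℝ (Fin dn) → ℝ) (hlamc : ContinuousOn lam X)
    (αl : ℝ → ℝ) (hαl : IsKInf αl)
    (hdiss : ∀ x ∈ X, ∀ u ∈ U, f (x, u) ∈ X →
      αl (distOrbit p (fun i => (PX i, PU i)) (x, u)) ≤
        rotCost f ℓ lam (avgCost ℓ p PX PU) (x, u))
    -- A3 (terminal conditions)
    (Xf : Set (EuclideanSpace ℝ (Fin dn))) (hXfc : IsCompact Xf) (hXfX : Xf ⊆ X)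
    (hPXf : ∀ i < p, PX i ∈ Xf)
    (Vf : EuclideanSpace ℝ (Fin dn) → ℝ) (hVfc : ContinuousOn Vf Xf)
    (uf : EuclideanSpace ℝ (Fin dn) → EuclideanSpace ℝ (Fin dm))
    (hufU : ∀ x ∈ Xf, uf x ∈ U)
    (hufXf : ∀ x ∈ Xf, f (x, uf x) ∈ Xf)
    (hufD : ∀ x ∈ Xf, Vf (f (x, uf x)) + ℓ (x, uf x) - avgCost ℓ p PX PU ≤ Vf x)
    -- A5 (bound on V_N)
    (γV : ℝ → ℝ)
    (hA5 : ∀ N : ℕ, 0 < N → ∀ x ∈ XN f X U Xf N, ∀ i < p,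
      ‖x - PX i‖ = distOrbitX p PX x →
      |VN f X U ℓ Vf Xf N x - VN f X U ℓ Vf Xf N (PX i)| ≤ γV (distOrbitX p PX x))
    -- A6 (minimality of the optimal orbit)
    (hmin : Set.InjOn PX (Set.Iio p))
    -- normalization ℓ_{Π*} = 0
    (hzero : avgCost ℓ p PX PU = 0) :
    ∃ D : ℝ, 0 < D ∧ ∀ N : ℕ, 0 < N → ∀ x ∈ XN f X U Xf N,
      -D ≤ VucInf f X U ℓ x ∧
        ∀ i < p, ‖x - PX i‖ = distOrbitX p PX x →
          VucInf f X U ℓ x ≤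
            γV (distOrbitX p PX x) + VN f X U ℓ Vf Xf N (PX i) - avgOrbit Vf p PX := by
  have hdiss0 := hzero ▸ hdiss
  have hℓ := sub_le_of_dissipative hαl hdiss0
  obtain ⟨Λ, hΛu⟩ := exists_abs_le_along_feasInf (f := f) hcomp hlamc
  have hJcesInf : ∀ x u, FeasInf f X U x u → -(2 * Λ) ≤ JcesInf f ℓ x u := fun x u hu =>
    neg_two_mul_le_JcesInf hℓ hu (hΛu x u hu)
  refine ⟨2 * |Λ| + 1, by positivity, fun N hN x hx => ⟨?_, fun i hi hix => ?_⟩⟩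
  · refine Real.le_sInf ?_ (by linarith [abs_nonneg Λ])
    rintro _ ⟨u, hu, rfl⟩
    linarith [hJcesInf x u hu, le_abs_self Λ]
  have hbdd : BddBelow ((fun u => JcesInf f ℓ x u) '' {u | FeasInf f X U x u}) :=
    ⟨_, by rintro _ ⟨u, hu, rfl⟩; exact hJcesInf x u hu⟩
  have hVN : VucInf f X U ℓ x + avgOrbit Vf p PX ≤ VN f X U ℓ Vf Xf N x := by
    obtain ⟨u0, hu0⟩ := hx
    refine le_csInf ⟨_, u0, hu0, rfl⟩ ?_
    rintro _ ⟨u, ⟨hu, hT⟩, rfl⟩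
    obtain ⟨w, hw, hJ⟩ := exists_feasInf_JcesInf_le (hcomp.uniformContinuousOn_of_continuous hfc)
      hp hopt.1 hmin hαl hdiss0 hXfX hPXf (hXfc.uniformContinuousOn_of_continuous hVfc)
      (hXfc.image_of_continuousOn (hVfc.add (hlamc.mono hXfX))).bddBelow hufU hufXf
      (fun z hz => by linarith [hzero ▸ hufD z hz]) hu hT
      fun w hw => isCoboundedUnder_le_of_le atTop (neg_two_mul_le_Jces hℓ hw (hΛu x w hw))
    have hVuc : VucInf f X U ℓ x ≤ JcesInf f ℓ x w := csInf_le hbdd ⟨w, hw, rfl⟩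
    change _ ≤ JN f ℓ Vf x u N
    linarith
  linarith [(abs_le.1 (hA5 N hN x hx i hi hix)).2]

theorem stmt8
    (dn dm : ℕ)
    (X : Set (EuclideanSpace ℝ (Fin dn))) (U : Set (EuclideanSpace ℝ (Fin dm)))
    (f : EuclideanSpace ℝ (Fin dn) × EuclideanSpace ℝ (Fin dm) → EuclideanSpace ℝ (Fin dn))
    (ℓ : EuclideanSpace ℝ (Fin dn) × EuclideanSpace ℝ (Fin dm) → ℝ)
    (p : ℕ) (hp : 0 < p)
    (PX : ℕ → EuclideanSpace ℝ (Fin dn)) (PU : ℕ → EuclideanSpace ℝ (Fin dm))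
    (hopt : IsOptimalOrbit f X U ℓ p PX PU)
    -- A1 (continuity and compactness)
    (hcomp : IsCompact (X ×ˢ U))
    (hfc : ContinuousOn f (X ×ˢ U)) (hlc : ContinuousOn ℓ (X ×ˢ U))
    -- A2 (strict dissipativity)
    (lam : EuclideanSpace ℝ (Fin dn) → ℝ) (hlamc : ContinuousOn lam X)
    (αl : ℝ → ℝ) (hαl : IsKInf αl)
    (hdiss : ∀ x ∈ X, ∀ u ∈ U, f (x, u) ∈ X →
      αl (distOrbit p (fun i => (PX i, PU i)) (x, u)) ≤
        rotCost f ℓ lam (avgCost ℓ p PX PU) (x, u))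
    -- A3 (terminal conditions)
    (Xf : Set (EuclideanSpace ℝ (Fin dn))) (hXfc : IsCompact Xf) (hXfX : Xf ⊆ X)
    (hPXf : ∀ i < p, PX i ∈ Xf)
    (Vf : EuclideanSpace ℝ (Fin dn) → ℝ) (hVfc : ContinuousOn Vf Xf)
    (uf : EuclideanSpace ℝ (Fin dn) → EuclideanSpace ℝ (Fin dm))
    (hufU : ∀ x ∈ Xf, uf x ∈ U) (hufX : ∀ x ∈ Xf, f (x, uf x) ∈ X)
    (hufXf : ∀ x ∈ Xf, f (x, uf x) ∈ Xf)
    (hufD : ∀ x ∈ Xf, Vf (f (x, uf x)) + ℓ (x, uf x) - avgCost ℓ p PX PU ≤ Vf x)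
    -- A5 (bound on V_N)
    (γV : ℝ → ℝ) (hγV : IsKInf γV)
    (hA5 : ∀ N : ℕ, 0 < N → ∀ x ∈ XN f X U Xf N, ∀ i < p,
      ‖x - PX i‖ = distOrbitX p PX x →
      |VN f X U ℓ Vf Xf N x - VN f X U ℓ Vf Xf N (PX i)| ≤ γV (distOrbitX p PX x))
    -- A6 (minimality of the optimal orbit)
    (hmin : Set.InjOn PX (Set.Iio p))
    -- normalization ℓ_{Π*} = 0
    (hzero : avgCost ℓ p PX PU = 0) :
    ∃ D : ℝ, 0 < D ∧ ∀ N : ℕ, 0 < N → ∀ x ∈ XN f X U Xf N,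
      -D ≤ VucInf f X U ℓ x ∧
        ∀ i < p, ‖x - PX i‖ = distOrbitX p PX x →
          VucInf f X U ℓ x ≤
            γV (distOrbitX p PX x) + VN f X U ℓ Vf Xf N (PX i) - avgOrbit Vf p PX :=
  stmt8_general dn dm X U f ℓ p hp PX PU hopt hcomp hfc lam hlamc αl hαl hdiss Xf hXfc hXfX hPXf Vf
    hVfc uf hufU hufXf hufD γV hA5 hmin hzero
end

section
/- (Rotated value on the orbit) Under Assumptions A1 (continuity and compactness), A2 (strict dissipativity), A3 (terminal conditions), A4 (terminal cost on orbit) and A5 (bound on V_N), the rotated value function vanishes on the optimal orbit: Ṽ_N(Π*_X(i)) = 0 for all i ∈ {0,...,p*−1} and all N ∈ N; equivalently, V_N(Π*_X(i)) + λ(Π*_X(i)) − λ_{Π*} = V_{Π*} + N·ℓ_{Π*} for all such i and N. -/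
open Filter Topology

section AuxProof

variable {E F : Type*} [NormedAddCommGroup E] [NormedAddCommGroup F]

lemma traj_succ (f : E × F → E) (x : E) (u : ℕ → F) (k : ℕ) :
    traj f x u (k + 1) = f (traj f x u k, u k) := rfl

lemma traj_orbit (f : E × F → E) {p : ℕ} (hp : 0 < p) (PX : ℕ → E) (PU : ℕ → F)
    (horb : ∀ i < p, PX ((i + 1) % p) = f (PX i, PU i)) {i : ℕ} (hi : i < p) :
    ∀ k, traj f (PX i) (fun k => PU ((i + k) % p)) k = PX ((i + k) % p) := by
  intro k
  induction k with
  | zero => simp [traj, Nat.mod_eq_of_lt hi]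
  | succ k ih =>
      rw [traj_succ, ih, ← horb _ (Nat.mod_lt _ hp), Nat.mod_add_mod]
      rfl

lemma sum_mod_shift {p : ℕ} (hp : 0 < p) (g : ℕ → ℝ) :
    ∑ j ∈ Finset.range p, g ((j + 1) % p) = ∑ j ∈ Finset.range p, g j := by
  obtain ⟨q, rfl⟩ := Nat.exists_eq_succ_of_ne_zero hp.ne'
  rw [Finset.sum_range_succ, Finset.sum_range_succ' g, Nat.mod_self]
  congr 1
  refine Finset.sum_congr rfl fun j hj => ?_
  have := Finset.mem_range.mp hj
  rw [Nat.mod_eq_of_lt (by omega)]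

end AuxProof

theorem stmt19
    (dn dm : ℕ)
    (X : Set (EuclideanSpace ℝ (Fin dn))) (U : Set (EuclideanSpace ℝ (Fin dm)))
    (f : EuclideanSpace ℝ (Fin dn) × EuclideanSpace ℝ (Fin dm) → EuclideanSpace ℝ (Fin dn))
    (ℓ : EuclideanSpace ℝ (Fin dn) × EuclideanSpace ℝ (Fin dm) → ℝ)
    (p : ℕ) (hp : 0 < p)
    (PX : ℕ → EuclideanSpace ℝ (Fin dn)) (PU : ℕ → EuclideanSpace ℝ (Fin dm))
    (hopt : IsOptimalOrbit f X U ℓ p PX PU)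
    -- A1 (continuity and compactness)
    (hcomp : IsCompact (X ×ˢ U))
    (hfc : ContinuousOn f (X ×ˢ U)) (hlc : ContinuousOn ℓ (X ×ˢ U))
    -- A2 (strict dissipativity)
    (lam : EuclideanSpace ℝ (Fin dn) → ℝ) (hlamc : ContinuousOn lam X)
    (αl : ℝ → ℝ) (hαl : IsKInf αl)
    (hdiss : ∀ x ∈ X, ∀ u ∈ U, f (x, u) ∈ X →
      αl (distOrbit p (fun i => (PX i, PU i)) (x, u)) ≤
        rotCost f ℓ lam (avgCost ℓ p PX PU) (x, u))
    -- A3 (terminal conditions)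
    (Xf : Set (EuclideanSpace ℝ (Fin dn))) (hXfc : IsCompact Xf) (hXfX : Xf ⊆ X)
    (hPXf : ∀ i < p, PX i ∈ Xf)
    (Vf : EuclideanSpace ℝ (Fin dn) → ℝ) (hVfc : ContinuousOn Vf Xf)
    (uf : EuclideanSpace ℝ (Fin dn) → EuclideanSpace ℝ (Fin dm))
    (hufU : ∀ x ∈ Xf, uf x ∈ U) (hufX : ∀ x ∈ Xf, f (x, uf x) ∈ X)
    (hufXf : ∀ x ∈ Xf, f (x, uf x) ∈ Xf)
    (hufD : ∀ x ∈ Xf, Vf (f (x, uf x)) + ℓ (x, uf x) - avgCost ℓ p PX PU ≤ Vf x)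
    -- A4 (terminal cost on the optimal orbit)
    (hA4 : ∀ i < p, Vf (PX i) = ℓ (PX i, PU i) - avgCost ℓ p PX PU + Vf (f (PX i, PU i)))
    -- A5 (bound on V_N)
    (γV : ℝ → ℝ) (hγV : IsKInf γV)
    (hA5 : ∀ N : ℕ, 0 < N → ∀ x ∈ XN f X U Xf N, ∀ i < p,
      ‖x - PX i‖ = distOrbitX p PX x →
      |VN f X U ℓ Vf Xf N x - VN f X U ℓ Vf Xf N (PX i)| ≤ γV (distOrbitX p PX x)) :
    ∀ N : ℕ, 0 < N → ∀ i < p,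
      VN f X U (rotCost f ℓ lam (avgCost ℓ p PX PU)) (fun y => Vf y + lam y - avgOrbit Vf p PX - avgOrbit lam p PX) Xf N (PX i) = 0 ∧
        VN f X U ℓ Vf Xf N (PX i) + lam (PX i) - avgOrbit lam p PX =
          avgOrbit Vf p PX + N * (avgCost ℓ p PX PU) := by
  classical
  obtain ⟨⟨hPXX, hPUU, horb⟩, -⟩ := hopt
  set lstar := avgCost ℓ p PX PU with hlstar
  have hp0 : (p : ℝ) ≠ 0 := Nat.cast_ne_zero.mpr hp.ne'
  have hsum_l : ∑ j ∈ Finset.range p, ℓ (PX j, PU j) = p * lstar := by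
    rw [hlstar]; unfold avgCost; field_simp
  -- α nonneg on [0,∞)
  have hα0 : αl 0 = 0 := hαl.2.2.1
  have hαnn : ∀ t, 0 ≤ t → 0 ≤ αl t := by
    intro t ht
    have := hαl.2.1.monotoneOn Set.self_mem_Ici (Set.mem_Ici.mpr ht) ht
    simpa [hα0] using this
  have hdnn : ∀ z, 0 ≤ distOrbit p (fun i => (PX i, PU i)) z :=
    fun z => Real.iInf_nonneg fun i => norm_nonneg _
  have hrotnn : ∀ x ∈ X, ∀ u ∈ U, f (x, u) ∈ X → 0 ≤ rotCost f ℓ lam lstar (x, u) :=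
    fun x hx u hu hf => le_trans (hαnn _ (hdnn _)) (hdiss x hx u hu hf)
  -- K1 : the rotated stage cost vanishes on the orbit
  have hK1 : ∀ j < p, ℓ (PX j, PU j) - lstar + lam (PX j) - lam (PX ((j + 1) % p)) = 0 := by
    have hnn : ∀ j ∈ Finset.range p,
        0 ≤ ℓ (PX j, PU j) - lstar + lam (PX j) - lam (PX ((j + 1) % p)) := by
      intro j hj
      have hj' := Finset.mem_range.mp hj
      have h := hrotnn (PX j) (hPXX j hj') (PU j) (hPUU j hj')
        (by rw [← horb j hj']; exact hPXX _ (Nat.mod_lt _ hp))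
      have hre : rotCost f ℓ lam lstar (PX j, PU j)
          = ℓ (PX j, PU j) - lstar + lam (PX j) - lam (f (PX j, PU j)) := rfl
      rw [hre] at h
      rw [horb j hj']
      exact h
    have hsum0 : ∑ j ∈ Finset.range p,
        (ℓ (PX j, PU j) - lstar + lam (PX j) - lam (PX ((j + 1) % p))) = 0 := by
      have h2 : ∑ j ∈ Finset.range p,
          (ℓ (PX j, PU j) - lstar + lam (PX j) - lam (PX ((j + 1) % p)))
          = (∑ j ∈ Finset.range p, ℓ (PX j, PU j)) - p * lstar
            + (∑ j ∈ Finset.range p, lam (PX j))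
            - ∑ j ∈ Finset.range p, lam (PX ((j + 1) % p)) := by
        rw [Finset.sum_sub_distrib, Finset.sum_add_distrib, Finset.sum_sub_distrib,
          Finset.sum_const, Finset.card_range, nsmul_eq_mul]
      rw [h2, hsum_l, sum_mod_shift hp (fun j => lam (PX j))]
      ring
    intro j hj
    exact (Finset.sum_eq_zero_iff_of_nonneg hnn).mp hsum0 j (Finset.mem_range.mpr hj)
  -- A4 rearranged
  have hlstep : ∀ j < p, ℓ (PX j, PU j) = lstar + Vf (PX j) - Vf (PX ((j + 1) % p)) := by
    intro j hj
    have h := hA4 j hj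
    rw [← horb j hj] at h
    linarith
  -- D := Vf + lam is constant on the orbit
  set D : ℕ → ℝ := fun j => Vf (PX j) + lam (PX j) with hD
  have hDstep : ∀ j < p, D ((j + 1) % p) = D j := by
    intro j hj
    have h1 := hK1 j hj
    have h2 := hlstep j hj
    simp only [hD]
    linarith
  have hDmod : ∀ k, D (k % p) = D 0 := by
    intro k
    induction k with
    | zero => simp
    | succ k ih => rw [← Nat.mod_add_mod, hDstep _ (Nat.mod_lt _ hp), ih]
  have hDeq : ∀ j < p, Vf (PX j) + lam (PX j) = D 0 := by
    intro j hj
    have := hDmod j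
    rwa [Nat.mod_eq_of_lt hj] at this
  have hD0 : avgOrbit Vf p PX + avgOrbit lam p PX = D 0 := by
    have hs : (∑ j ∈ Finset.range p, Vf (PX j)) + ∑ j ∈ Finset.range p, lam (PX j)
        = p * D 0 := by
      rw [← Finset.sum_add_distrib,
        Finset.sum_congr rfl (fun j hj => hDeq j (Finset.mem_range.mp hj)),
        Finset.sum_const, Finset.card_range, nsmul_eq_mul]
    calc avgOrbit Vf p PX + avgOrbit lam p PX
        = (1 / (p : ℝ)) * ((∑ j ∈ Finset.range p, Vf (PX j))
            + ∑ j ∈ Finset.range p, lam (PX j)) := by unfold avgOrbit; ring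
      _ = D 0 := by rw [hs]; field_simp
  -- K3 : Vf + lam ≥ D 0 on Xf (minimizer argument)
  have hXfne : Set.Nonempty Xf := ⟨PX 0, hPXf 0 hp⟩
  have hK3 : ∀ y ∈ Xf, D 0 ≤ Vf y + lam y := by
    have hgc : ContinuousOn (fun x => Vf x + lam x) Xf := hVfc.add (hlamc.mono hXfX)
    obtain ⟨x₀, hx₀, hmin⟩ := hXfc.exists_isMinOn hXfne hgc
    have hmin' : ∀ y ∈ Xf, Vf x₀ + lam x₀ ≤ Vf y + lam y := fun y hy => hmin hy
    have hx₁ : f (x₀, uf x₀) ∈ Xf := hufXf x₀ hx₀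
    have hrle : rotCost f ℓ lam lstar (x₀, uf x₀) ≤ 0 := by
      have h1 := hmin' _ hx₁
      have h2 := hufD x₀ hx₀
      have hre : rotCost f ℓ lam lstar (x₀, uf x₀)
          = ℓ (x₀, uf x₀) - lstar + lam x₀ - lam (f (x₀, uf x₀)) := rfl
      rw [hre]
      linarith
    have hrge : 0 ≤ rotCost f ℓ lam lstar (x₀, uf x₀) :=
      hrotnn x₀ (hXfX hx₀) (uf x₀) (hufU x₀ hx₀) (hXfX hx₁)
    have hα := hdiss x₀ (hXfX hx₀) (uf x₀) (hufU x₀ hx₀) (hXfX hx₁)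
    have hr0 : αl (distOrbit p (fun i => (PX i, PU i)) (x₀, uf x₀)) = 0 :=
      le_antisymm (le_trans hα hrle) (hαnn _ (hdnn _))
    have hdist0 : distOrbit p (fun i => (PX i, PU i)) (x₀, uf x₀) = 0 :=
      hαl.2.1.injOn (Set.mem_Ici.mpr (hdnn _)) Set.self_mem_Ici (by rw [hr0, hα0])
    haveI : Nonempty (Fin p) := Fin.pos_iff_nonempty.mp hp
    obtain ⟨i₀, hi₀⟩ := Finite.exists_min
      (fun i : Fin p => ‖(x₀, uf x₀) - (PX (i : ℕ), PU (i : ℕ))‖)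
    have h1 : ‖(x₀, uf x₀) - (PX (i₀ : ℕ), PU (i₀ : ℕ))‖
        ≤ distOrbit p (fun i => (PX i, PU i)) (x₀, uf x₀) := le_ciInf hi₀
    rw [hdist0] at h1
    have hz : (x₀, uf x₀) = (PX (i₀ : ℕ), PU (i₀ : ℕ)) :=
      sub_eq_zero.mp (norm_eq_zero.mp (le_antisymm h1 (norm_nonneg _)))
    have hx0eq : x₀ = PX (i₀ : ℕ) := congrArg Prod.fst hz
    intro y hy
    have h0 : Vf x₀ + lam x₀ = D 0 := by rw [hx0eq]; exact hDeq _ i₀.isLt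
    have := hmin' y hy
    linarith
  -- Relation between rotated and plain cost functionals
  have hrel : ∀ (x : EuclideanSpace ℝ (Fin dn)) (u : ℕ → EuclideanSpace ℝ (Fin dm)) (N : ℕ),
      JN f (rotCost f ℓ lam lstar)
        (fun y => Vf y + lam y - avgOrbit Vf p PX - avgOrbit lam p PX) x u N
      = JN f ℓ Vf x u N + lam x - N * lstar - D 0 := by
    intro x u N
    unfold JN J1
    have hterm : ∀ k ∈ Finset.range N, rotCost f ℓ lam lstar (traj f x u k, u k)
        = ℓ (traj f x u k, u k)
          + (lam (traj f x u k) - lam (traj f x u (k + 1))) - lstar := by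
      intro k _
      have hre : rotCost f ℓ lam lstar (traj f x u k, u k)
          = ℓ (traj f x u k, u k) - lstar + lam (traj f x u k)
            - lam (f (traj f x u k, u k)) := rfl
      rw [hre, ← traj_succ f x u k]
      ring
    rw [Finset.sum_congr rfl hterm, Finset.sum_sub_distrib, Finset.sum_add_distrib,
      Finset.sum_range_sub' (fun k => lam (traj f x u k)), Finset.sum_const,
      Finset.card_range, nsmul_eq_mul]
    have htr0 : traj f x u 0 = x := rfl
    rw [htr0]
    beta_reduce
    linarith [hD0]
  -- main part
  intro N hN i hi
  have htr := traj_orbit f hp PX PU horb hi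
  have hfeas : FeasN f X U (PX i) N (fun k => PU ((i + k) % p)) ∧
      traj f (PX i) (fun k => PU ((i + k) % p)) N ∈ Xf := by
    refine ⟨⟨fun k _ => hPUU _ (Nat.mod_lt _ hp), fun k _ => ?_⟩, ?_⟩
    · rw [htr k]; exact hPXX _ (Nat.mod_lt _ hp)
    · rw [htr N]; exact hPXf _ (Nat.mod_lt _ hp)
  have hJ1orbit : ∀ M, J1 f ℓ (PX i) (fun k => PU ((i + k) % p)) M
      = M * lstar + Vf (PX i) - Vf (PX ((i + M) % p)) := by
    intro M
    induction M with
    | zero => simp [J1, Nat.mod_eq_of_lt hi]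
    | succ M ih =>
        unfold J1 at ih ⊢
        rw [Finset.sum_range_succ, ih, htr M]
        have hlM := hlstep ((i + M) % p) (Nat.mod_lt _ hp)
        rw [hlM, Nat.mod_add_mod]
        push_cast
        ring_nf
  have hJNorbit : JN f ℓ Vf (PX i) (fun k => PU ((i + k) % p)) N
      = N * lstar + Vf (PX i) := by
    unfold JN
    rw [hJ1orbit N, htr N]
    ring
  -- lower bound for any feasible input
  have hlow : ∀ u : ℕ → EuclideanSpace ℝ (Fin dm), FeasN f X U (PX i) N u →
      traj f (PX i) u N ∈ Xf →
      N * lstar + D 0 - lam (PX i) ≤ JN f ℓ Vf (PX i) u N := by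
    rintro u ⟨huU, huX⟩ hterm
    have key : ∀ k ∈ Finset.range N,
        lstar - (lam (traj f (PX i) u k) - lam (traj f (PX i) u (k + 1)))
          ≤ ℓ (traj f (PX i) u k, u k) := by
      intro k hk
      have hk' := Finset.mem_range.mp hk
      have h := hrotnn (traj f (PX i) u k) (huX k hk'.le) (u k) (huU k hk')
        (huX (k + 1) hk')
      have hre : rotCost f ℓ lam lstar (traj f (PX i) u k, u k)
          = ℓ (traj f (PX i) u k, u k) - lstar + lam (traj f (PX i) u k)
            - lam (traj f (PX i) u (k + 1)) := rfl
      rw [hre] at h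
      linarith
    have hsumle := Finset.sum_le_sum key
    have hL : ∑ k ∈ Finset.range N,
        (lstar - (lam (traj f (PX i) u k) - lam (traj f (PX i) u (k + 1))))
        = N * lstar - (lam (PX i) - lam (traj f (PX i) u N)) := by
      rw [Finset.sum_sub_distrib, Finset.sum_const, Finset.card_range, nsmul_eq_mul,
        Finset.sum_range_sub' (fun k => lam (traj f (PX i) u k))]
      rfl
    have hVfN := hK3 _ hterm
    unfold JN J1
    rw [hL] at hsumle
    linarith
  -- value functions
  have hVfi : Vf (PX i) + lam (PX i) = D 0 := hDeq i hi
  have hlbP : ∀ r ∈ (fun u => JN f ℓ Vf (PX i) u N) ''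
      {u | FeasN f X U (PX i) N u ∧ traj f (PX i) u N ∈ Xf},
      N * lstar + D 0 - lam (PX i) ≤ r := by
    rintro r ⟨u, ⟨h1, h2⟩, rfl⟩
    exact hlow u h1 h2
  have hmemP : JN f ℓ Vf (PX i) (fun k => PU ((i + k) % p)) N
      ∈ (fun u => JN f ℓ Vf (PX i) u N) ''
        {u | FeasN f X U (PX i) N u ∧ traj f (PX i) u N ∈ Xf} :=
    ⟨_, ⟨hfeas.1, hfeas.2⟩, rfl⟩
  have hVNub : VN f X U ℓ Vf Xf N (PX i) ≤ N * lstar + Vf (PX i) := by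
    have := csInf_le ⟨_, hlbP⟩ hmemP
    rw [hJNorbit] at this
    exact this
  have hVNlb : N * lstar + D 0 - lam (PX i) ≤ VN f X U ℓ Vf Xf N (PX i) :=
    le_csInf ⟨_, hmemP⟩ hlbP
  have hVNeq : VN f X U ℓ Vf Xf N (PX i) = N * lstar + D 0 - lam (PX i) := by
    have : N * lstar + Vf (PX i) = N * lstar + D 0 - lam (PX i) := by linarith
    rw [this] at hVNub
    exact le_antisymm hVNub hVNlb
  -- rotated value function
  have hlbR : ∀ r ∈ (fun u => JN f (rotCost f ℓ lam lstar)
      (fun y => Vf y + lam y - avgOrbit Vf p PX - avgOrbit lam p PX) (PX i) u N) ''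
      {u | FeasN f X U (PX i) N u ∧ traj f (PX i) u N ∈ Xf},
      (0 : ℝ) ≤ r := by
    rintro r ⟨u, ⟨h1, h2⟩, rfl⟩
    have h3 := hlow u h1 h2
    show (0:ℝ) ≤ JN f (rotCost f ℓ lam lstar)
      (fun y => Vf y + lam y - avgOrbit Vf p PX - avgOrbit lam p PX) (PX i) u N
    rw [hrel]
    linarith
  have hmemR : (0 : ℝ) ∈ (fun u => JN f (rotCost f ℓ lam lstar)
      (fun y => Vf y + lam y - avgOrbit Vf p PX - avgOrbit lam p PX) (PX i) u N) ''
      {u | FeasN f X U (PX i) N u ∧ traj f (PX i) u N ∈ Xf} := by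
    refine ⟨fun k => PU ((i + k) % p), ⟨hfeas.1, hfeas.2⟩, ?_⟩
    show JN f (rotCost f ℓ lam lstar)
      (fun y => Vf y + lam y - avgOrbit Vf p PX - avgOrbit lam p PX) (PX i)
      (fun k => PU ((i + k) % p)) N = 0
    rw [hrel, hJNorbit]
    linarith
  constructor
  · exact le_antisymm (csInf_le ⟨0, hlbR⟩ hmemR) (le_csInf ⟨0, hmemR⟩ hlbR)
  · rw [hVNeq]
    linarith [hD0]
end
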